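/- Let g ∈ L^n with wt_R(g) = t, and let k be an integer with 1 ≤ k ≤ t ≤ min(n, m). Then the minimum rank distance of the extended Gabidulin code EG_k(g) (the row space over L of Moore(g, k)) equals t − k + 1; that is, every nonzero codeword has rank weight at least t − k + 1, and some nonzero codeword has rank weight exactly t − k + 1. -/

import Mathlib

open Matrix

/-- Rank weight of a vector over the extension `L` of the base field `K`. -/
noncomputable def rankWeight (K : Type*) {L : Type*} [Field K] [Field L] [Algebra K L]
    {ι : Type*} (v : ι → L) : ℕ :=
  Module.finrank K (Submodule.span K (Set.range v))

/-- The `k × n` Moore matrix of `g`: entry `(i, j)` is `g j ^ q ^ i`. -/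
def moore (q : ℕ) {L : Type*} [Field L] {n : ℕ} (g : Fin n → L) (k : ℕ) :
    Matrix (Fin k) (Fin n) L :=
  Matrix.of fun i j => g j ^ q ^ (i : ℕ)

/-!
A codeword `x ᵥ* moore q g k` is `f ∘ g` for the `K`-linear map `f z = ∑ xᵢ z ^ q ^ i`
(`q = #K`), so its support is `f (V)` with `V = span K (range g)`, and its rank weight is
`t - dim (V ⊓ ker f)`. The kernel of `f` consists of roots of a nonzero polynomial of degree at
most `q ^ (k - 1)`, so it has at most `q ^ (k - 1)` elements and dimension at most `k - 1`; this is
the lower bound. Conversely, `k - 1` independent vectors of `V` impose only `k - 1` linear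
conditions on the `k` coefficients `x`, so some `f` with `x ≠ 0` kills them, and the bound is
attained.
-/

open Module Polynomial

lemma Submodule.finrank_map_add_finrank_inf_ker {K V W : Type*} [DivisionRing K] [AddCommGroup V]
    [Module K V] [AddCommGroup W] [Module K W] (f : V →ₗ[K] W) (p : Submodule K V)
    [FiniteDimensional K p] :
    finrank K (p.map f) + finrank K ↥(p ⊓ LinearMap.ker f) = finrank K p := by
  have h := LinearMap.finrank_range_add_finrank_ker (f.domRestrict p)
  rwa [LinearMap.range_domRestrict, LinearMap.ker_domRestrict,
    ← Submodule.finrank_map_subtype_eq, Submodule.map_comap_subtype] at h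

lemma Matrix.exists_ne_zero_vecMul_eq_zero {R m n : Type*} [Field R] [Fintype m] [Fintype n]
    (A : Matrix m n R) (h : Fintype.card n < Fintype.card m) : ∃ x ≠ 0, x ᵥ* A = 0 := by
  obtain ⟨x, hx, hx0⟩ := Submodule.exists_mem_ne_zero_of_ne_bot <|
    LinearMap.ker_ne_bot_of_finrank_lt (f := A.vecMulLinear) (by simpa using h)
  exact ⟨x, hx0, hx⟩

lemma rankWeight_zero (K : Type*) {L ι : Type*} [Field K] [Field L] [Algebra K L] :
    rankWeight K (0 : ι → L) = 0 := by
  rw [rankWeight, Submodule.span_eq_bot.mpr (by rintro _ ⟨i, rfl⟩; rfl), finrank_bot]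

section LinearizedPoly

variable {R : Type*} [Semiring R] (q : ℕ) {k : ℕ}

noncomputable def linearizedPoly (x : Fin k → R) : R[X] :=
  ∑ i, C (x i) * X ^ q ^ (i : ℕ)

lemma eval_linearizedPoly (x : Fin k → R) (z : R) :
    (linearizedPoly q x).eval z = ∑ i, x i * z ^ q ^ (i : ℕ) := by
  simp [linearizedPoly, eval_finsetSum]

lemma natDegree_linearizedPoly_le (hq : 0 < q) (x : Fin k → R) :
    (linearizedPoly q x).natDegree ≤ q ^ (k - 1) := by
  refine natDegree_sum_le_of_forall_le _ _ fun i _ => (natDegree_C_mul_X_pow_le _ _).trans ?_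
  exact Nat.pow_le_pow_right hq (by omega)

lemma coeff_linearizedPoly_pow (hq : 1 < q) (x : Fin k → R) (j : Fin k) :
    (linearizedPoly q x).coeff (q ^ (j : ℕ)) = x j := by
  simp [linearizedPoly, coeff_C_mul, coeff_X_pow, (Nat.pow_right_injective hq).eq_iff, Fin.val_inj]

lemma linearizedPoly_ne_zero (hq : 1 < q) {x : Fin k → R} (hx : x ≠ 0) :
    linearizedPoly q x ≠ 0 := by
  obtain ⟨j, hj⟩ := Function.ne_iff.mp hx
  exact ne_of_apply_ne (coeff · (q ^ (j : ℕ)))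
    (by simpa [coeff_linearizedPoly_pow q hq] using hj)

end LinearizedPoly

section LinearizedMap

variable (K : Type*) {L : Type*} [Field K] [Fintype K] [Field L] [Algebra K L] {k : ℕ}

noncomputable def linearizedMap (x : Fin k → L) : L →ₗ[K] L :=
  ∑ i, x i • (FiniteField.frobeniusAlgHom K L ^ (i : ℕ)).toLinearMap

lemma linearizedMap_apply (x : Fin k → L) (z : L) :
    linearizedMap K x z = (linearizedPoly (Fintype.card K) x).eval z := by
  simp [linearizedMap, eval_linearizedPoly, AlgHom.coe_pow, FiniteField.coe_frobeniusAlgHom,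
    pow_iterate]

lemma vecMul_moore {n : ℕ} (x : Fin k → L) (g : Fin n → L) :
    x ᵥ* moore (Fintype.card K) g k = linearizedMap K x ∘ g := by
  ext j
  simp [linearizedMap_apply, eval_linearizedPoly, vecMul, dotProduct, moore]

lemma finrank_le_of_le_ker_linearizedMap {x : Fin k → L} (hx : x ≠ 0) {W : Submodule K L}
    (hW : W ≤ LinearMap.ker (linearizedMap K x)) : finrank K W ≤ k - 1 := by
  classical
  set P := linearizedPoly (Fintype.card K) x
  have hP : P ≠ 0 := linearizedPoly_ne_zero _ Fintype.one_lt_card hx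
  have hroots : (W : Set L) ⊆ P.roots.toFinset := fun z hz => by
    simpa [P, mem_roots hP, ← linearizedMap_apply] using hW hz
  have : Finite W := (P.roots.toFinset.finite_toSet.subset hroots).to_subtype
  have hcard : Fintype.card K ^ finrank K W ≤ Fintype.card K ^ (k - 1) :=
    calc Fintype.card K ^ finrank K W = Nat.card W := by
          rw [Module.natCard_eq_pow_finrank (K := K), Nat.card_eq_fintype_card]
      _ ≤ Nat.card (P.roots.toFinset : Set L) := Nat.card_mono (Finset.finite_toSet _) hroots
      _ = P.roots.toFinset.card := by rw [Nat.card_coe_set_eq, Set.ncard_coe_finset]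
      _ ≤ P.natDegree := P.roots.toFinset_card_le.trans P.card_roots'
      _ ≤ Fintype.card K ^ (k - 1) := natDegree_linearizedPoly_le _ Fintype.card_pos x
  exact (Nat.pow_le_pow_iff_right Fintype.one_lt_card).mp hcard

lemma rankWeight_vecMul_moore_add_finrank_inf_ker {n : ℕ} (x : Fin k → L) (g : Fin n → L) :
    rankWeight K (x ᵥ* moore (Fintype.card K) g k) +
      finrank K ↥(Submodule.span K (Set.range g) ⊓ LinearMap.ker (linearizedMap K x)) =
      rankWeight K g := by
  have := FiniteDimensional.span_of_finite K (Set.finite_range g)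
  rw [rankWeight, rankWeight, vecMul_moore, Set.range_comp, ← Submodule.map_span]
  exact Submodule.finrank_map_add_finrank_inf_ker _ _

lemma rankWeight_sub_le_rankWeight_vecMul_moore {n : ℕ} {x : Fin k → L} (hx : x ≠ 0)
    (g : Fin n → L) :
    rankWeight K g - (k - 1) ≤ rankWeight K (x ᵥ* moore (Fintype.card K) g k) := by
  have hsum := rankWeight_vecMul_moore_add_finrank_inf_ker K x g
  have hker := finrank_le_of_le_ker_linearizedMap K hx
    (inf_le_right (a := Submodule.span K (Set.range g)))
  omega

lemma exists_ne_zero_le_finrank_inf_ker_linearizedMap (V : Submodule K L) [FiniteDimensional K V]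
    {d : ℕ} (hdk : d < k) (hdV : d ≤ finrank K V) :
    ∃ x : Fin k → L, x ≠ 0 ∧
      d ≤ finrank K ↥(V ⊓ LinearMap.ker (linearizedMap K x)) := by
  let b := Module.finBasis K V
  let w : Fin d → L := fun j => b (Fin.castLE hdV j)
  have hw : LinearIndependent K w :=
    (b.linearIndependent.map' V.subtype V.ker_subtype).comp _ (Fin.castLE_injective hdV)
  obtain ⟨x, hx, hxw⟩ :=
    (moore (Fintype.card K) w k).exists_ne_zero_vecMul_eq_zero (by simpa using hdk)
  rw [vecMul_moore] at hxw
  refine ⟨x, hx, ?_⟩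
  calc d = finrank K (Submodule.span K (Set.range w)) := by
        rw [finrank_span_eq_card hw, Fintype.card_fin]
    _ ≤ _ := Submodule.finrank_mono <| Submodule.span_le.mpr <| Set.range_subset_iff.mpr
        fun j => Submodule.mem_inf.mpr ⟨(b _).2, LinearMap.mem_ker.mpr (congrFun hxw j)⟩

end LinearizedMap

theorem extendedGabidulin_min_rank_distance_general
    (q n k t : ℕ)
    (K L : Type*) [Field K] [Fintype K] [Field L] [Algebra K L]
    (hq : Fintype.card K = q)
    (hkpos : 1 ≤ k) (hkt : k ≤ t)
    (g : Fin n → L) (hg : rankWeight K g = t) :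
    (∀ c : Fin n → L,
      (∃ x : Fin k → L, c = x ᵥ* moore q g k) → c ≠ 0 → t - k + 1 ≤ rankWeight K c) ∧
    ∃ c : Fin n → L,
      (∃ x : Fin k → L, c = x ᵥ* moore q g k) ∧ c ≠ 0 ∧
      rankWeight K c = t - k + 1 := by
  subst hq
  constructor
  · rintro c ⟨x, rfl⟩ hc
    have hx : x ≠ 0 := by rintro rfl; exact hc (zero_vecMul _)
    have := rankWeight_sub_le_rankWeight_vecMul_moore K hx g
    omega
  · have := FiniteDimensional.span_of_finite K (Set.finite_range g)
    obtain ⟨x, hx, hker⟩ := exists_ne_zero_le_finrank_inf_ker_linearizedMap K (k := k)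
      (d := k - 1) (Submodule.span K (Set.range g)) (by omega) (by rw [← rankWeight, hg]; omega)
    have hsum := rankWeight_vecMul_moore_add_finrank_inf_ker K x g
    have hlower := rankWeight_sub_le_rankWeight_vecMul_moore K hx g
    have hweight : rankWeight K (x ᵥ* moore (Fintype.card K) g k) = t - k + 1 := by omega
    refine ⟨_, ⟨x, rfl⟩, fun hc => ?_, hweight⟩
    rw [hc, rankWeight_zero] at hweight
    omega

theorem extendedGabidulin_min_rank_distance
    (q m n k t : ℕ)
    (K L : Type*) [Field K] [Fintype K] [Field L] [Algebra K L]
    (hq : Fintype.card K = q) (hm : Module.finrank K L = m)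
    (hkpos : 1 ≤ k) (hkt : k ≤ t) (ht : t ≤ min n m)
    (g : Fin n → L) (hg : rankWeight K g = t) :
    (∀ c : Fin n → L,
      (∃ x : Fin k → L, c = x ᵥ* moore q g k) → c ≠ 0 → t - k + 1 ≤ rankWeight K c) ∧
    ∃ c : Fin n → L,
      (∃ x : Fin k → L, c = x ᵥ* moore q g k) ∧ c ≠ 0 ∧
      rankWeight K c = t - k + 1 :=
  extendedGabidulin_min_rank_distance_general q n k t K L hq hkpos hkt g hg
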